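/- One-step error recursion for the averaged KWSA gradient surrogate (Lemma 1, part 3): let x_prev, x ∈ C with ‖x − x_prev‖ ≤ γR for some γ ≥ 0, let d_prev ∈ ℝ^d, ρ ∈ (0, 1], c > 0, and let d(y) = (1 − ρ)·d_prev + ρ·Σ_{i=1}^d ((F(x + c·e_i, y) − F(x, y))/c)·e_i, where e_1, …, e_d is the standard orthonormal basis of ℝ^d. Then ∫ ‖∇f(x) − d(y)‖² dP(y) ≤ 2ρ²σ² + 2ρc²dL² + 2L²R²γ²/ρ + (1 − ρ/2)·‖∇f(x_prev) − d_prev‖². -/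

import Mathlib

/-!
Write `v = ∇f(x_prev) - d_prev`, `δ = ∇f(x) - ∇f(x_prev)` and `g` for the finite-difference
estimator, so that the error is `(1 - ρ) • (v + δ) + ρ • (∇f(x) - g)` and `‖δ‖ ≤ LγR`.
By the descent lemma for `L`-smooth functions every coordinate of `g` lies within `Lc/2` of the
sample gradient, so `g` is a pointwise `B`-biased estimate of `∇f(x)`, `B² = dL²c²/4`.
Expanding the square and applying Young's inequality to the cross term bounds the mean squared
error by `(1 + ρ)‖(1 - ρ)(v + δ)‖² + ρB² + 2ρ²(B² + σ²)`, and Young's inequality with weight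
`ρ/2` turns the first term into `(1 - ρ/2)‖v‖² + (2/ρ)‖δ‖²`.
-/

open MeasureTheory Filter Topology
open scoped RealInnerProductSpace

section Smooth

variable {E : Type*} [NormedAddCommGroup E] [InnerProductSpace ℝ E] [CompleteSpace E]

theorem hasDerivAt_apply_add_smul_gradient {φ : E → ℝ} {x h : E} {t : ℝ}
    (hφ : DifferentiableAt ℝ φ (x + t • h)) :
    HasDerivAt (fun s : ℝ => φ (x + s • h)) ⟪gradient φ (x + t • h), h⟫ t := by
  have hline : HasDerivAt (fun s : ℝ => x + s • h) h t := by
    simpa using ((hasDerivAt_id t).smul_const h).const_add x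
  simpa [Function.comp_def] using hφ.hasGradientAt.hasFDerivAt.comp_hasDerivAt t hline

theorem abs_sub_sub_inner_gradient_le {φ : E → ℝ} {L : ℝ} (hφ : Differentiable ℝ φ)
    (hLip : ∀ u w, ‖gradient φ u - gradient φ w‖ ≤ L * ‖u - w‖) (x h : E) :
    |φ (x + h) - φ x - ⟪gradient φ x, h⟫| ≤ L / 2 * ‖h‖ ^ 2 := by
  set r : ℝ → ℝ := fun t => φ (x + t • h) - φ x - t * ⟪gradient φ x, h⟫
  have hr : ∀ t, HasDerivAt r (⟪gradient φ (x + t • h), h⟫ - ⟪gradient φ x, h⟫) t := fun t =>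
    (((hasDerivAt_apply_add_smul_gradient (hφ _)).sub_const (φ x)).sub
      ((hasDerivAt_id' t).mul_const ⟪gradient φ x, h⟫)).congr_deriv (by ring)
  have hB : ∀ t, HasDerivAt (fun t : ℝ => L / 2 * ‖h‖ ^ 2 * t ^ 2) (L * ‖h‖ ^ 2 * t) t := fun t =>
    ((hasDerivAt_pow 2 t).const_mul (L / 2 * ‖h‖ ^ 2)).congr_deriv (by push_cast; ring)
  have hbound : ∀ t ∈ Set.Ico (0 : ℝ) 1,
      ‖⟪gradient φ (x + t • h), h⟫ - ⟪gradient φ x, h⟫‖ ≤ L * ‖h‖ ^ 2 * t := by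
    rintro t ⟨ht, -⟩
    calc ‖⟪gradient φ (x + t • h), h⟫ - ⟪gradient φ x, h⟫‖
        = |⟪gradient φ (x + t • h) - gradient φ x, h⟫| := by rw [inner_sub_left, Real.norm_eq_abs]
      _ ≤ ‖gradient φ (x + t • h) - gradient φ x‖ * ‖h‖ := abs_real_inner_le_norm _ _
      _ ≤ L * ‖t • h‖ * ‖h‖ := by gcongr; simpa using hLip (x + t • h) x
      _ = L * ‖h‖ ^ 2 * t := by rw [norm_smul, Real.norm_of_nonneg ht]; ring
  have := image_norm_le_of_norm_deriv_right_le_deriv_boundary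
    (fun t _ => (hr t).continuousAt.continuousWithinAt) (fun t _ => (hr t).hasDerivWithinAt)
    (by simp [r]) hB hbound (Set.right_mem_Icc.2 zero_le_one)
  simpa [r] using this

theorem abs_slope_sub_inner_gradient_le {φ : E → ℝ} {L c : ℝ} (hφ : Differentiable ℝ φ)
    (hLip : ∀ u w, ‖gradient φ u - gradient φ w‖ ≤ L * ‖u - w‖) (hc : 0 < c) (x v : E) :
    |(φ (x + c • v) - φ x) / c - ⟪gradient φ x, v⟫| ≤ L / 2 * c * ‖v‖ ^ 2 := by
  have h := abs_sub_sub_inner_gradient_le hφ hLip x (c • v)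
  rw [inner_smul_right, norm_smul, Real.norm_of_nonneg hc.le] at h
  have hslope : (φ (x + c • v) - φ x) / c - ⟪gradient φ x, v⟫ =
      (φ (x + c • v) - φ x - c * ⟪gradient φ x, v⟫) / c := by
    field_simp
  calc |(φ (x + c • v) - φ x) / c - ⟪gradient φ x, v⟫|
      = |φ (x + c • v) - φ x - c * ⟪gradient φ x, v⟫| / c := by rw [hslope, abs_div, abs_of_pos hc]
    _ ≤ L / 2 * (c * ‖v‖) ^ 2 / c := by gcongr
    _ = L / 2 * c * ‖v‖ ^ 2 := by field_simp

end Smooth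

section FiniteDifference

variable {ι : Type*} [Fintype ι] [DecidableEq ι]

noncomputable def finiteDiffGradient (φ : EuclideanSpace ℝ ι → ℝ) (c : ℝ) (x : EuclideanSpace ℝ ι) :
    EuclideanSpace ℝ ι :=
  ∑ i, ((φ (x + c • EuclideanSpace.single i (1 : ℝ)) - φ x) / c) • EuclideanSpace.single i (1 : ℝ)

theorem finiteDiffGradient_apply (φ : EuclideanSpace ℝ ι → ℝ) (c : ℝ) (x : EuclideanSpace ℝ ι)
    (i : ι) :
    finiteDiffGradient φ c x i = (φ (x + c • EuclideanSpace.single i (1 : ℝ)) - φ x) / c := by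
  simp [finiteDiffGradient, Pi.single_apply]

theorem norm_gradient_sub_finiteDiffGradient_sq_le {φ : EuclideanSpace ℝ ι → ℝ} {L c : ℝ}
    (hφ : Differentiable ℝ φ) (hLip : ∀ u w, ‖gradient φ u - gradient φ w‖ ≤ L * ‖u - w‖)
    (hc : 0 < c) (x : EuclideanSpace ℝ ι) :
    ‖gradient φ x - finiteDiffGradient φ c x‖ ^ 2 ≤ Fintype.card ι * (L / 2 * c) ^ 2 := by
  have hcoord : ∀ i, (gradient φ x i - finiteDiffGradient φ c x i) ^ 2 ≤ (L / 2 * c) ^ 2 := by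
    intro i
    have := abs_slope_sub_inner_gradient_le hφ hLip hc x (EuclideanSpace.single i 1)
    rw [EuclideanSpace.inner_single_right, PiLp.norm_single] at this
    rw [← sq_abs, abs_sub_comm, finiteDiffGradient_apply]
    gcongr
    simpa using this
  calc ‖gradient φ x - finiteDiffGradient φ c x‖ ^ 2
      = ∑ i, (gradient φ x i - finiteDiffGradient φ c x i) ^ 2 := by
        simp [EuclideanSpace.real_norm_sq_eq]
    _ ≤ ∑ _i : ι, (L / 2 * c) ^ 2 := Finset.sum_le_sum fun i _ => hcoord i
    _ = Fintype.card ι * (L / 2 * c) ^ 2 := by simp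

theorem tendsto_finiteDiffGradient {φ : EuclideanSpace ℝ ι → ℝ} {x : EuclideanSpace ℝ ι}
    (hφ : DifferentiableAt ℝ φ x) :
    Tendsto (fun c => finiteDiffGradient φ c x) (𝓝[≠] (0 : ℝ)) (𝓝 (gradient φ x)) := by
  have hcoord : ∀ i, Tendsto
      (fun c => (φ (x + c • EuclideanSpace.single i (1 : ℝ)) - φ x) / c) (𝓝[≠] 0)
      (𝓝 (gradient φ x i)) := by
    intro i
    have := hasDerivAt_iff_tendsto_slope.1
      (hasDerivAt_apply_add_smul_gradient (φ := φ) (x := x) (h := EuclideanSpace.single i (1 : ℝ))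
        (t := 0) (by simpa using hφ))
    rw [EuclideanSpace.inner_single_right, one_mul, conj_trivial, zero_smul, add_zero] at this
    refine this.congr fun c => ?_
    rw [slope_def_field, zero_smul, add_zero, sub_zero]
  rw [← (EuclideanSpace.basisFun ι ℝ).sum_repr (gradient φ x)]
  simp only [EuclideanSpace.basisFun_repr, EuclideanSpace.basisFun_apply]
  exact tendsto_finsetSum _ fun i _ => (hcoord i).smul_const (EuclideanSpace.single i (1 : ℝ))

variable {Y : Type*} [MeasurableSpace Y]

theorem measurable_finiteDiffGradient {F : EuclideanSpace ℝ ι → Y → ℝ} (hF : ∀ z, Measurable (F z))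
    (c : ℝ) (x : EuclideanSpace ℝ ι) :
    Measurable fun y => finiteDiffGradient (fun z => F z y) c x :=
  Finset.measurable_sum _ fun _ _ => (((hF _).sub (hF x)).div_const c).smul_const _

theorem aestronglyMeasurable_gradient {P : Measure Y} {F : EuclideanSpace ℝ ι → Y → ℝ}
    (hF : ∀ z, Measurable (F z)) {x : EuclideanSpace ℝ ι}
    (hdiff : ∀ᵐ y ∂P, DifferentiableAt ℝ (fun z => F z y) x) :
    AEStronglyMeasurable (fun y => gradient (fun z => F z y) x) P := by
  -- `F` is not assumed continuous in `y`, so `measurable_fderiv_with_param` is unavailable.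
  have hstep : Tendsto (fun n : ℕ => 1 / ((n : ℝ) + 1)) atTop (𝓝[≠] 0) :=
    tendsto_nhdsWithin_of_tendsto_nhds_of_eventually_within _
      tendsto_one_div_add_atTop_nhds_zero_nat (Eventually.of_forall fun n => by
        simp only [Set.mem_compl_iff, Set.mem_singleton_iff]; positivity)
  refine aestronglyMeasurable_of_tendsto_ae (atTop : Filter ℕ)
    (fun n => (measurable_finiteDiffGradient hF (1 / ((n : ℝ) + 1)) x).aestronglyMeasurable) ?_
  filter_upwards [hdiff] with y hy using (tendsto_finiteDiffGradient hy).comp hstep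

end FiniteDifference

section Estimator

variable {E : Type*} [NormedAddCommGroup E]
  {Y : Type*} [MeasurableSpace Y] {P : Measure Y} [IsProbabilityMeasure P]

theorem integral_norm_sub_sq_le_of_norm_le {m s : Y → E} {B : ℝ} (hm : MemLp m 2 P)
    (hs : MemLp s 2 P) (hmB : ∀ᵐ y ∂P, ‖m y‖ ≤ B) :
    ∫ y, ‖m y - s y‖ ^ 2 ∂P ≤ 2 * (B ^ 2 + ∫ y, ‖s y‖ ^ 2 ∂P) := by
  have hm2 := (memLp_two_iff_integrable_sq_norm hm.1).1 hm
  have hs2 := (memLp_two_iff_integrable_sq_norm hs.1).1 hs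
  have hms2 := (memLp_two_iff_integrable_sq_norm (hm.1.sub hs.1)).1 (hm.sub hs)
  have hmB2 : ∫ y, ‖m y‖ ^ 2 ∂P ≤ B ^ 2 := by
    refine (integral_mono_ae hm2 (integrable_const (B ^ 2)) ?_).trans (by simp)
    filter_upwards [hmB] with y hy using pow_le_pow_left₀ (norm_nonneg _) hy 2
  calc ∫ y, ‖m y - s y‖ ^ 2 ∂P
      ≤ ∫ y, 2 * (‖m y‖ ^ 2 + ‖s y‖ ^ 2) ∂P :=
        integral_mono hms2 ((hm2.add hs2).const_mul 2) fun y =>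
          (pow_le_pow_left₀ (norm_nonneg _) (norm_sub_le _ _) 2).trans add_sq_le
    _ = 2 * (∫ y, ‖m y‖ ^ 2 ∂P + ∫ y, ‖s y‖ ^ 2 ∂P) := by
        rw [integral_const_mul, integral_add hm2 hs2]
    _ ≤ 2 * (B ^ 2 + ∫ y, ‖s y‖ ^ 2 ∂P) := by gcongr

variable [InnerProductSpace ℝ E] [CompleteSpace E]

theorem integral_norm_add_smul_sq_le (u : E) {ρ : ℝ} (hρ : 0 ≤ ρ) {b : Y → E} (hb : MemLp b 2 P) :
    ∫ y, ‖u + ρ • b y‖ ^ 2 ∂P ≤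
      (1 + ρ) * ‖u‖ ^ 2 + ρ * ‖∫ y, b y ∂P‖ ^ 2 + ρ ^ 2 * ∫ y, ‖b y‖ ^ 2 ∂P := by
  have hb1 : Integrable b P := hb.integrable one_le_two
  have hb2 : Integrable (fun y => ‖b y‖ ^ 2) P := (memLp_two_iff_integrable_sq_norm hb.1).1 hb
  have hexpand : ∫ y, ‖u + ρ • b y‖ ^ 2 ∂P =
      ‖u‖ ^ 2 + 2 * ρ * ⟪u, ∫ y, b y ∂P⟫ + ρ ^ 2 * ∫ y, ‖b y‖ ^ 2 ∂P := by
    simp_rw [norm_add_sq_real, inner_smul_right, norm_smul, mul_pow, Real.norm_of_nonneg hρ]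
    rw [integral_add (by fun_prop) (hb2.const_mul _), integral_add (integrable_const _)
      (((hb1.const_inner u).const_mul ρ).const_mul 2), integral_const,
      integral_const_mul, integral_const_mul, integral_const_mul,
      integral_inner hb1]
    simp; ring
  have hyoung : 2 * ⟪u, ∫ y, b y ∂P⟫ ≤ ‖u‖ ^ 2 + ‖∫ y, b y ∂P‖ ^ 2 :=
    (mul_le_mul_of_nonneg_left (real_inner_le_norm _ _) zero_le_two).trans
      (by nlinarith [two_mul_le_add_sq ‖u‖ ‖∫ y, b y ∂P‖])
  rw [hexpand]
  nlinarith [mul_le_mul_of_nonneg_left hyoung hρ]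

theorem integral_norm_add_smul_sub_sq_le (u μ : E) {ρ B σ : ℝ} (hρ : 0 < ρ) {X g : Y → E}
    (hX : AEStronglyMeasurable X P) (hg : AEStronglyMeasurable g P)
    (hbias : ∀ᵐ y ∂P, ‖X y - g y‖ ≤ B) (hmean : ∫ y, X y ∂P = μ)
    (hvar : ∫ y, ‖X y - μ‖ ^ 2 ∂P ≤ σ ^ 2) :
    ∫ y, ‖u + ρ • (μ - g y)‖ ^ 2 ∂P ≤
      (1 + ρ) * ‖u‖ ^ 2 + ρ * B ^ 2 + 2 * ρ ^ 2 * (B ^ 2 + σ ^ 2) := by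
  -- A non-integrable square has Bochner integral `0`; otherwise everything below lies in `L²`.
  by_cases hint : Integrable (fun y => ‖u + ρ • (μ - g y)‖ ^ 2) P
  swap
  · rw [integral_undef hint]; positivity
  have he : MemLp (fun y => u + ρ • (μ - g y)) 2 P :=
    (memLp_two_iff_integrable_sq_norm (by fun_prop)).2 hint
  have hb : MemLp (fun y => μ - g y) 2 P := by
    convert (he.sub (memLp_const u)).const_smul ρ⁻¹ using 1
    ext y; simp [smul_smul, hρ.ne']
  have hm : MemLp (fun y => X y - g y) 2 P := .of_bound (hX.sub hg) B hbias
  have hs : MemLp (fun y => X y - μ) 2 P := by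
    convert hm.sub hb using 1; ext y; simp
  have hX1 : Integrable X P := by
    refine ((hs.integrable one_le_two).add (integrable_const μ)).congr (ae_of_all _ fun y => ?_)
    simp
  have hfirst : ‖∫ y, μ - g y ∂P‖ ^ 2 ≤ B ^ 2 := by
    have hunbiased : ∫ y, X y - μ ∂P = 0 := by
      rw [integral_sub hX1 (integrable_const μ), hmean]; simp
    have hsplit := integral_sub (hm.integrable one_le_two) (hs.integrable one_le_two)
    simp only [sub_sub_sub_cancel_left, hunbiased, sub_zero] at hsplit
    rw [hsplit]
    refine pow_le_pow_left₀ (norm_nonneg _) ?_ 2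
    simpa using norm_integral_le_of_norm_le_const hbias
  have hsecond : ∫ y, ‖μ - g y‖ ^ 2 ∂P ≤ 2 * (B ^ 2 + σ ^ 2) := by
    have h := integral_norm_sub_sq_le_of_norm_le hm hs hbias
    simp only [sub_sub_sub_cancel_left] at h
    exact h.trans (by gcongr)
  calc ∫ y, ‖u + ρ • (μ - g y)‖ ^ 2 ∂P
      ≤ (1 + ρ) * ‖u‖ ^ 2 + ρ * ‖∫ y, μ - g y ∂P‖ ^ 2 + ρ ^ 2 * ∫ y, ‖μ - g y‖ ^ 2 ∂P :=
        integral_norm_add_smul_sq_le u hρ.le hb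
    _ ≤ (1 + ρ) * ‖u‖ ^ 2 + ρ * B ^ 2 + ρ ^ 2 * (2 * (B ^ 2 + σ ^ 2)) := by gcongr
    _ = (1 + ρ) * ‖u‖ ^ 2 + ρ * B ^ 2 + 2 * ρ ^ 2 * (B ^ 2 + σ ^ 2) := by ring

end Estimator

theorem one_add_mul_norm_smul_add_sq_le {F : Type*} [SeminormedAddCommGroup F] [NormedSpace ℝ F]
    {ρ : ℝ} (hρ0 : 0 < ρ) (hρ1 : ρ ≤ 1) (v w : F) :
    (1 + ρ) * ‖(1 - ρ) • (v + w)‖ ^ 2 ≤ (1 - ρ / 2) * ‖v‖ ^ 2 + 2 / ρ * ‖w‖ ^ 2 := by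
  have hyoung : (‖v‖ + ‖w‖) ^ 2 ≤ (1 + ρ / 2) * ‖v‖ ^ 2 + (1 + 2 / ρ) * ‖w‖ ^ 2 := by
    have h : ρ / 2 * ‖v‖ ^ 2 + 2 / ρ * ‖w‖ ^ 2 - 2 * ‖v‖ * ‖w‖ =
        2 / ρ * (ρ / 2 * ‖v‖ - ‖w‖) ^ 2 := by
      field_simp; ring
    nlinarith [mul_nonneg (div_nonneg zero_le_two hρ0.le) (sq_nonneg (ρ / 2 * ‖v‖ - ‖w‖))]
  have hv : (1 + ρ) * (1 - ρ) ^ 2 * (1 + ρ / 2) ≤ 1 - ρ / 2 := by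
    nlinarith [mul_nonneg (mul_nonneg hρ0.le hρ0.le) (sub_nonneg.2 hρ1)]
  have hw : (1 + ρ) * (1 - ρ) ^ 2 * (1 + 2 / ρ) ≤ 2 / ρ := by
    rw [show 1 + 2 / ρ = (ρ + 2) / ρ by field_simp, ← mul_div_assoc,
      div_le_div_iff_of_pos_right hρ0]
    nlinarith [mul_nonneg (mul_nonneg hρ0.le hρ0.le) (sub_nonneg.2 hρ1)]
  have hcoef : 0 ≤ (1 + ρ) * (1 - ρ) ^ 2 := by nlinarith
  calc (1 + ρ) * ‖(1 - ρ) • (v + w)‖ ^ 2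
      ≤ (1 + ρ) * (1 - ρ) ^ 2 * (‖v‖ + ‖w‖) ^ 2 := by
        rw [norm_smul, mul_pow, Real.norm_eq_abs, sq_abs, ← mul_assoc]
        gcongr
        exact norm_add_le v w
    _ ≤ (1 + ρ) * (1 - ρ) ^ 2 * ((1 + ρ / 2) * ‖v‖ ^ 2 + (1 + 2 / ρ) * ‖w‖ ^ 2) := by gcongr
    _ = (1 + ρ) * (1 - ρ) ^ 2 * (1 + ρ / 2) * ‖v‖ ^ 2
          + (1 + ρ) * (1 - ρ) ^ 2 * (1 + 2 / ρ) * ‖w‖ ^ 2 := by ring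
    _ ≤ (1 - ρ / 2) * ‖v‖ ^ 2 + 2 / ρ * ‖w‖ ^ 2 := by gcongr

theorem kwsa_surrogate_one_step_error_recursion_general
    (d : ℕ)
    (C : Set (EuclideanSpace ℝ (Fin d)))
    (R : ℝ)
    (Y : Type*) [MeasurableSpace Y] (P : Measure Y) [IsProbabilityMeasure P]
    (F : EuclideanSpace ℝ (Fin d) → Y → ℝ)
    (hFmeas : Measurable (Function.uncurry F))
    (L : ℝ) (hL : 0 < L)
    (hFdiff : ∀ᵐ y ∂P, Differentiable ℝ (fun x' => F x' y))
    (hFlip : ∀ᵐ y ∂P, ∀ u w : EuclideanSpace ℝ (Fin d),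
      ‖gradient (fun x' => F x' y) u - gradient (fun x' => F x' y) w‖ ≤ L * ‖u - w‖)
    (f : EuclideanSpace ℝ (Fin d) → ℝ)
    (hgradf : ∀ x' : EuclideanSpace ℝ (Fin d),
      gradient f x' = ∫ y, gradient (fun x'' => F x'' y) x' ∂P)
    (σ : ℝ) (hσ : ∀ x' ∈ C,
      (∫ y, ‖gradient (fun x'' => F x'' y) x' - gradient f x'‖ ^ 2 ∂P) ≤ σ ^ 2)
    (hflip : ∀ u w, ‖gradient f u - gradient f w‖ ≤ L * ‖u - w‖)
    (xprev x : EuclideanSpace ℝ (Fin d)) (hx : x ∈ C)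
    (γ : ℝ) (hstep : ‖x - xprev‖ ≤ γ * R)
    (dprev : EuclideanSpace ℝ (Fin d))
    (ρ : ℝ) (hρ0 : 0 < ρ) (hρ1 : ρ ≤ 1)
    (c : ℝ) (hc : 0 < c) :
    (∫ y,
        ‖gradient f x -
          ((1 - ρ) • dprev +
            ρ • ∑ i : Fin d, ((F (x + c • EuclideanSpace.single i (1 : ℝ)) y - F x y) / c) •
              EuclideanSpace.single i (1 : ℝ))‖ ^ 2 ∂P) ≤
      2 * ρ ^ 2 * σ ^ 2 + 2 * ρ * c ^ 2 * d * L ^ 2 +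
        2 * L ^ 2 * R ^ 2 * γ ^ 2 / ρ +
        (1 - ρ / 2) * ‖gradient f xprev - dprev‖ ^ 2 := by
  set v := gradient f xprev - dprev
  set δ := gradient f x - gradient f xprev
  set B := √(d * (L / 2 * c) ^ 2)
  have hF : ∀ z, Measurable (F z) := fun z => hFmeas.comp measurable_prodMk_left
  have hbias : ∀ᵐ y ∂P, ‖gradient (F · y) x - finiteDiffGradient (F · y) c x‖ ≤ B := by
    filter_upwards [hFdiff, hFlip] with y hdiff hlip
    exact Real.le_sqrt_of_sq_le (by
      simpa using norm_gradient_sub_finiteDiffGradient_sq_le hdiff hlip hc x)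
  have hestimate := integral_norm_add_smul_sub_sq_le ((1 - ρ) • (v + δ)) (gradient f x) hρ0
    (aestronglyMeasurable_gradient hF (hFdiff.mono fun y hy => hy x))
    (measurable_finiteDiffGradient hF c x).aestronglyMeasurable hbias (hgradf x).symm (hσ x hx)
  have hcontract := one_add_mul_norm_smul_add_sq_le hρ0 hρ1 v δ
  have hdrift : 2 / ρ * ‖δ‖ ^ 2 ≤ 2 * L ^ 2 * R ^ 2 * γ ^ 2 / ρ :=
    calc 2 / ρ * ‖δ‖ ^ 2 ≤ 2 / ρ * (L * (γ * R)) ^ 2 := by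
          gcongr; exact (hflip x xprev).trans (by gcongr)
      _ = 2 * L ^ 2 * R ^ 2 * γ ^ 2 / ρ := by ring
  have hbias_sq : ρ * B ^ 2 + 2 * ρ ^ 2 * B ^ 2 ≤ 2 * ρ * c ^ 2 * d * L ^ 2 := by
    rw [Real.sq_sqrt (by positivity)]
    nlinarith [mul_nonneg (mul_nonneg hρ0.le (sub_nonneg.2 hρ1)) (sq_nonneg (L * c)),
      mul_nonneg hρ0.le (sq_nonneg (L * c))]
  calc _ = ∫ y, ‖(1 - ρ) • (v + δ) +
          ρ • (gradient f x - finiteDiffGradient (F · y) c x)‖ ^ 2 ∂P := by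
        congr 1; ext y; congr 2; simp only [finiteDiffGradient, v, δ]; module
    _ ≤ (1 + ρ) * ‖(1 - ρ) • (v + δ)‖ ^ 2 + ρ * B ^ 2 + 2 * ρ ^ 2 * (B ^ 2 + σ ^ 2) := hestimate
    _ ≤ _ := by linarith

theorem kwsa_surrogate_one_step_error_recursion
    (d : ℕ) (hd : 1 ≤ d)
    (C : Set (EuclideanSpace ℝ (Fin d)))
    (hCne : C.Nonempty) (hCcomp : IsCompact C) (hCconv : Convex ℝ C)
    (R : ℝ) (hR : 0 < R) (hdiam : ∀ u ∈ C, ∀ w ∈ C, ‖u - w‖ ≤ R)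
    (Y : Type*) [MeasurableSpace Y] (P : Measure Y) [IsProbabilityMeasure P]
    (F : EuclideanSpace ℝ (Fin d) → Y → ℝ)
    (hFmeas : Measurable (Function.uncurry F))
    (L : ℝ) (hL : 0 < L)
    (hFdiff : ∀ᵐ y ∂P, Differentiable ℝ (fun x' => F x' y))
    (hFlip : ∀ᵐ y ∂P, ∀ u w : EuclideanSpace ℝ (Fin d),
      ‖gradient (fun x' => F x' y) u - gradient (fun x' => F x' y) w‖ ≤ L * ‖u - w‖)
    (f : EuclideanSpace ℝ (Fin d) → ℝ)
    (hf : ∀ x', f x' = ∫ y, F x' y ∂P)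
    (hgradf : ∀ x' : EuclideanSpace ℝ (Fin d),
      gradient f x' = ∫ y, gradient (fun x'' => F x'' y) x' ∂P)
    (L₁ : ℝ) (hL₁ : ∀ x' ∈ C, (∫ y, ‖gradient (fun x'' => F x'' y) x'‖ ^ 2 ∂P) ≤ L₁ ^ 2)
    (σ : ℝ) (hσ : ∀ x' ∈ C,
      (∫ y, ‖gradient (fun x'' => F x'' y) x' - gradient f x'‖ ^ 2 ∂P) ≤ σ ^ 2)
    (hflip : ∀ u w, ‖gradient f u - gradient f w‖ ≤ L * ‖u - w‖)
    (xprev x : EuclideanSpace ℝ (Fin d)) (hxprev : xprev ∈ C) (hx : x ∈ C)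
    (γ : ℝ) (hγ : 0 ≤ γ) (hstep : ‖x - xprev‖ ≤ γ * R)
    (dprev : EuclideanSpace ℝ (Fin d))
    (ρ : ℝ) (hρ0 : 0 < ρ) (hρ1 : ρ ≤ 1)
    (c : ℝ) (hc : 0 < c) :
    (∫ y,
        ‖gradient f x -
          ((1 - ρ) • dprev +
            ρ • ∑ i : Fin d, ((F (x + c • EuclideanSpace.single i (1 : ℝ)) y - F x y) / c) •
              EuclideanSpace.single i (1 : ℝ))‖ ^ 2 ∂P) ≤
      2 * ρ ^ 2 * σ ^ 2 + 2 * ρ * c ^ 2 * d * L ^ 2 +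
        2 * L ^ 2 * R ^ 2 * γ ^ 2 / ρ +
        (1 - ρ / 2) * ‖gradient f xprev - dprev‖ ^ 2 :=
  kwsa_surrogate_one_step_error_recursion_general d C R Y P F hFmeas L hL hFdiff hFlip f hgradf σ hσ
    hflip xprev x hx γ hstep dprev ρ hρ0 hρ1 c hc
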